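/- Let X = (X₁,…,X_d) be a strict row contraction of n×n complex matrices, set Δ_X = I_n − Σᵢ₌₁^d XᵢXᵢ*, and define 𝒱_X = (P_X^{1/2} ⊗ I_n ⊗ Δ_X^{1/2})·B̆_n ∈ M_{n⁴×n²}(ℂ), where B̆_n is the ampliated boomerang matrix with r = n. Then 𝒱_X is an isometry: 𝒱_X*·𝒱_X = I_{n²}. -/

import Mathlib

/-!
Common definitions: the ψ-involution, `vec`, the elementary Pick matrix, the Choi matrix,
Kronecker-product helpers with right-associated index types, the boomerang matrices, the
commutation matrix, and the Moore–Penrose predicate.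
-/

open Matrix Filter
open scoped Kronecker Matrix.Norms.L2Operator ComplexOrder

noncomputable section

/-- Square `n × n` complex matrices. -/
abbrev Mat (n : ℕ) := Matrix (Fin n) (Fin n) ℂ

/-- Entrywise complex conjugate of a matrix. -/
def conjM {m k : Type*} (A : Matrix m k ℂ) : Matrix m k ℂ := A.map (starRingEnd ℂ)

/-- `vec A` stacks the columns of `A`: the slot `(j, i)` (column `j`, row `i`) holds `A i j`. -/
def vecM (n : ℕ) (A : Mat n) : Matrix (Fin n × Fin n) Unit ℂ := Matrix.of fun p _ => A p.2 p.1

/-- The `ψ`-involution on `M_{n²}(ℂ)`: the linear map determined on matrix units by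
`ψ(E_{ij} ⊗ E_{kℓ}) = E_{ℓj} ⊗ E_{ki}`, equivalently `ψ(A ⊗ B) = vec(B)·vec(A)ᵀ`. -/
def psi (n : ℕ) (U : Matrix (Fin n × Fin n) (Fin n × Fin n) ℂ) :
    Matrix (Fin n × Fin n) (Fin n × Fin n) ℂ :=
  Matrix.of fun p q => U (q.2, p.2) (q.1, p.1)

/-- `X` is a strict row contraction: `‖Σᵢ Xᵢ Xᵢ*‖ < 1` in the L² operator norm. -/
def StrictRowContraction {n : ℕ} {ι : Type*} [Fintype ι] (X : ι → Mat n) : Prop :=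
  ‖∑ i, X i * (X i)ᴴ‖ < 1

/-- The elementary Pick matrix `P_X = ψ((I_{n²} − Σᵢ conj(Xᵢ) ⊗ Xᵢ)⁻¹)`. -/
def pick {n : ℕ} {ι : Type*} [Fintype ι] (X : ι → Mat n) :
    Matrix (Fin n × Fin n) (Fin n × Fin n) ℂ :=
  psi n ((1 - ∑ i, conjM (X i) ⊗ₖ X i)⁻¹)

/-- The Choi matrix `𝔠_n = Σ_{i,j} E_{ij} ⊗ E_{ij} ∈ M_{n²}(ℂ)`. -/
def choiM (n : ℕ) : Matrix (Fin n × Fin n) (Fin n × Fin n) ℂ :=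
  ∑ i : Fin n, ∑ j : Fin n, single i j (1 : ℂ) ⊗ₖ single i j (1 : ℂ)

/-- `X^w = X_{i₁} ⋯ X_{i_k}` for a word `w = i₁⋯i_k` in the free monoid. -/
def wordProd {n : ℕ} {ι : Type*} (X : ι → Mat n) (w : List ι) : Mat n := (w.map X).prod

/-- Kronecker product `A ⊗ C` where `A` carries a product index, with the resulting
index types flattened right-associatively (`(a × b) × c ↦ a × (b × c)`). -/
def krA {a b c a' b' c' : Type*} (A : Matrix (a × b) (a' × b') ℂ) (C : Matrix c c' ℂ) :
    Matrix (a × b × c) (a' × b' × c') ℂ :=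
  Matrix.of fun p q => A (p.1, p.2.1) (q.1, q.2.1) * C p.2.2 q.2.2

/-- Kronecker product `M ⊗ C` where `M` carries a triple product index, flattened
right-associatively. -/
def krT {a b c e a' b' c' e' : Type*} (M : Matrix (a × b × c) (a' × b' × c') ℂ)
    (C : Matrix e e' ℂ) : Matrix (a × b × c × e) (a' × b' × c' × e') ℂ :=
  Matrix.of fun p q => M (p.1, p.2.1, p.2.2.1) (q.1, q.2.1, q.2.2.1) * C p.2.2.2 q.2.2.2

/-- Triple Kronecker product `A ⊗ B ⊗ C` with right-associated index types. -/
def kr3 {a b c a' b' c' : Type*} (A : Matrix a a' ℂ) (B : Matrix b b' ℂ) (C : Matrix c c' ℂ) :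
    Matrix (a × b × c) (a' × b' × c') ℂ :=
  Matrix.of fun p q => A p.1 q.1 * B p.2.1 q.2.1 * C p.2.2 q.2.2

/-- The boomerang matrix `B̆ = Σ_{i,j} e_i ⊗ e_j ⊗ E_{ij} ∈ M_{n³×n}(ℂ)`:
its entry at row `(i, j, k)`, column `ℓ` is `δ_{k i} δ_{ℓ j}`. -/
def boom (n : ℕ) : Matrix (Fin n × Fin n × Fin n) (Fin n) ℂ :=
  Matrix.of fun p l => if p.2.2 = p.1 ∧ l = p.2.1 then 1 else 0

/-- The commutation (permutation) matrix `Q_{n,r}`, satisfying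
`Q_{n,r} (U ⊗ V) Q_{n,r}ᵀ = V ⊗ U` for `U ∈ M_n`, `V ∈ M_r`. -/
def commMat (n r : ℕ) : Matrix (Fin r × Fin n) (Fin n × Fin r) ℂ :=
  Matrix.of fun p q => if p.2 = q.1 ∧ p.1 = q.2 then 1 else 0

/-- `Σ_{i,j} e_i ⊗ e_j ⊗ I_r ⊗ E_{ij}`: its entry at row `(i, j, a, k)`, column `(b, ℓ)`
is `δ_{k i} δ_{ℓ j} δ_{a b}`. -/
def preBoom (n r : ℕ) : Matrix (Fin n × Fin n × Fin r × Fin n) (Fin r × Fin n) ℂ :=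
  Matrix.of fun p q => if p.2.2.2 = p.1 ∧ q.2 = p.2.1 ∧ p.2.2.1 = q.1 then 1 else 0

/-- The ampliated boomerang matrix `B̆_r = (Σ_{i,j} e_i ⊗ e_j ⊗ I_r ⊗ E_{ij}) · Q_{n,r}`. -/
def boomAmp (n r : ℕ) : Matrix (Fin n × Fin n × Fin r × Fin n) (Fin n × Fin r) ℂ :=
  preBoom n r * commMat n r

/-- The positive semidefinite square root (removed from Mathlib; restored with its old definition). -/
def Matrix.PosSemidef.sqrt {m : Type*} [Fintype m] [DecidableEq m] {𝕜 : Type*} [RCLike 𝕜]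
    {A : Matrix m m 𝕜} (hA : A.PosSemidef) : Matrix m m 𝕜 :=
  hA.1.eigenvectorUnitary.1 * diagonal ((↑) ∘ (√·) ∘ hA.1.eigenvalues) *
    (star hA.1.eigenvectorUnitary : Matrix m m 𝕜)

/-- `B` is the Moore–Penrose pseudoinverse of `A` (the four Penrose conditions). -/
structure IsMoorePenroseInv {m k : Type*} [Fintype m] [Fintype k]
    (A : Matrix m k ℂ) (B : Matrix k m ℂ) : Prop where
  mul_inv_mul : A * B * A = A
  inv_mul_inv : B * A * B = B
  hermitian_mul_inv : (A * B)ᴴ = A * B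
  hermitian_inv_mul : (B * A)ᴴ = B * A

/-!
Under `vec`, the matrix `I − Σᵢ conj(Xᵢ) ⊗ Xᵢ` acts as `Z ↦ Z − Σᵢ Xᵢ Z Xᵢ*`, which sends `I` to
`Δ_X`. Writing `Σᵢ Xᵢ Z Xᵢ* = R (I ⊗ Z) R*` with the row `R = [X₁ ⋯ X_d]` gives
`‖Σᵢ Xᵢ Z Xᵢ*‖ ≤ ‖R R*‖ ‖Z‖`, so for a strict row contraction this map has no nonzero fixed
point and `I − Σᵢ conj(Xᵢ) ⊗ Xᵢ` is invertible; its inverse sends `vec Δ_X` back to `vec I`,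
which, read through `ψ`, says that pairing `P_X` with `Δ_X` gives the identity. On the other hand
`𝒱_X* 𝒱_X = B̆* (P_X ⊗ I ⊗ Δ_X) B̆`, and the boomerang matrix extracts exactly this pairing.
-/

namespace Matrix

section RowContraction

variable {ι k m : Type*} [Fintype ι] [Fintype k]

lemma l2_opNorm_one_kronecker_le [DecidableEq ι] [DecidableEq k] (Z : Matrix k k ℂ) :
    ‖(1 : Matrix ι ι ℂ) ⊗ₖ Z‖ ≤ ‖Z‖ := by
  rw [← l2_opNorm_toEuclideanCLM]
  refine ContinuousLinearMap.opNorm_le_bound _ (norm_nonneg _) fun x => ?_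
  let y : ι → EuclideanSpace ℂ k := fun i => WithLp.toLp 2 fun b => x (i, b)
  have hslice : ∀ i b, ((1 : Matrix ι ι ℂ) ⊗ₖ Z *ᵥ x.ofLp) (i, b) = (Z *ᵥ (y i).ofLp) b := by
    intro i b
    simp [mulVec, dotProduct, Fintype.sum_prod_type, one_apply, y]
  have hnorm : ∀ v : EuclideanSpace ℂ (ι × k),
      ‖v‖ ^ 2 = ∑ i, ‖WithLp.toLp 2 fun b => v (i, b)‖ ^ 2 := by
    intro v
    simp [EuclideanSpace.norm_sq_eq, Fintype.sum_prod_type]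
  refine (sq_le_sq₀ (by positivity) (by positivity)).mp ?_
  rw [hnorm, mul_pow, hnorm x, Finset.mul_sum]
  refine Finset.sum_le_sum fun i _ => ?_
  simp only [ofLp_toEuclideanCLM, hslice]
  rw [← mul_pow]
  exact pow_le_pow_left₀ (norm_nonneg _) (l2_opNorm_mulVec Z (y i)) 2

def blockRow (X : ι → Matrix m k ℂ) : Matrix m (ι × k) ℂ := of fun a p => X p.1 a p.2

lemma blockRow_mul_one_kronecker_mul_conjTranspose [DecidableEq ι] (X : ι → Matrix m k ℂ)
    (Z : Matrix k k ℂ) :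
    blockRow X * ((1 : Matrix ι ι ℂ) ⊗ₖ Z) * (blockRow X)ᴴ = ∑ i, X i * Z * (X i)ᴴ := by
  ext a a'
  simp [blockRow, mul_apply, sum_apply, Fintype.sum_prod_type, one_apply, Finset.sum_mul, ite_mul]

lemma norm_sum_mul_mul_conjTranspose_le [Fintype m] [DecidableEq ι] [DecidableEq k] [DecidableEq m]
    (X : ι → Matrix m k ℂ) (Z : Matrix k k ℂ) :
    ‖∑ i, X i * Z * (X i)ᴴ‖ ≤ ‖∑ i, X i * (X i)ᴴ‖ * ‖Z‖ := by
  have hR : ‖∑ i, X i * (X i)ᴴ‖ = ‖blockRow X‖ * ‖blockRow X‖ := by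
    have := blockRow_mul_one_kronecker_mul_conjTranspose X 1
    simp only [one_kronecker_one, Matrix.mul_one] at this
    rw [← this, ← l2_opNorm_conjTranspose (blockRow X), ← l2_opNorm_conjTranspose_mul_self,
      conjTranspose_conjTranspose]
  rw [← blockRow_mul_one_kronecker_mul_conjTranspose X Z, hR]
  calc _ ≤ ‖blockRow X‖ * ‖(1 : Matrix ι ι ℂ) ⊗ₖ Z‖ * ‖(blockRow X)ᴴ‖ :=
        (l2_opNorm_mul _ _).trans (mul_le_mul_of_nonneg_right (l2_opNorm_mul _ _) (norm_nonneg _))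
    _ ≤ ‖blockRow X‖ * ‖Z‖ * ‖blockRow X‖ := by
        rw [l2_opNorm_conjTranspose]
        gcongr
        exact l2_opNorm_one_kronecker_le Z
    _ = _ := by ring

variable [Fintype m] [DecidableEq m]

lemma eq_zero_of_sum_mul_mul_conjTranspose_eq_self [DecidableEq ι] {X : ι → Matrix m m ℂ}
    (hX : ‖∑ i, X i * (X i)ᴴ‖ < 1) {Z : Matrix m m ℂ} (hZ : ∑ i, X i * Z * (X i)ᴴ = Z) :
    Z = 0 := by
  have h := norm_sum_mul_mul_conjTranspose_le X Z
  rw [hZ] at h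
  exact norm_eq_zero.mp (by nlinarith [norm_nonneg Z])

lemma one_sub_sum_conjM_kronecker_mulVec_vec (X : ι → Matrix m m ℂ) (Z : Matrix m m ℂ) :
    (1 - ∑ i, conjM (X i) ⊗ₖ X i) *ᵥ vec Z = vec (Z - ∑ i, X i * Z * (X i)ᴴ) := by
  simp only [sub_mulVec, one_mulVec, sum_mulVec, vec_sub, vec_sum]
  congr 1
  exact Finset.sum_congr rfl fun i _ => kronecker_mulVec_vec _ _ _

lemma isUnit_one_sub_sum_conjM_kronecker [DecidableEq ι] {X : ι → Matrix m m ℂ}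
    (hX : ‖∑ i, X i * (X i)ᴴ‖ < 1) : IsUnit (1 - ∑ i, conjM (X i) ⊗ₖ X i) := by
  refine mulVec_injective_iff_isUnit.mp fun v w hvw => ?_
  obtain ⟨Z, hZ⟩ := vec_bijective.surjective (v - w)
  rw [← sub_eq_zero, ← mulVec_sub, ← hZ, one_sub_sum_conjM_kronecker_mulVec_vec, vec_eq_zero_iff,
    sub_eq_zero] at hvw
  rw [← sub_eq_zero, ← hZ, eq_zero_of_sum_mul_mul_conjTranspose_eq_self hX hvw.symm, vec_zero]

end RowContraction

namespace PosSemidef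

variable {m : Type*} [Fintype m] [DecidableEq m] {A : Matrix m m ℂ}

lemma isHermitian_sqrt (hA : A.PosSemidef) : hA.sqrt.IsHermitian := by
  refine isHermitian_mul_mul_conjTranspose _ (isHermitian_diagonal_of_self_adjoint _ ?_)
  ext i
  simp

lemma sqrt_mul_self (hA : A.PosSemidef) : hA.sqrt * hA.sqrt = A := by
  have hD : diagonal (((↑) : ℝ → ℂ) ∘ (√·) ∘ hA.1.eigenvalues) *
      diagonal ((↑) ∘ (√·) ∘ hA.1.eigenvalues) = diagonal (RCLike.ofReal ∘ hA.1.eigenvalues) := by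
    rw [diagonal_mul_diagonal]
    congr 1
    funext i
    simp [← Complex.ofReal_mul, Real.mul_self_sqrt (hA.eigenvalues_nonneg i)]
  conv_rhs => rw [hA.1.spectral_theorem, Unitary.conjStarAlgAut_apply, ← hD]
  simp only [sqrt, Matrix.mul_assoc]
  rw [← Matrix.mul_assoc (star _), Unitary.coe_star_mul_self, Matrix.one_mul]
  rfl

end PosSemidef

end Matrix

section KroneckerProducts

variable {a b c e a' b' c' e' a'' b'' c'' e'' : Type*}

lemma krT_krA_eq_submatrix (A : Matrix (a × b) (a' × b') ℂ) (C : Matrix c c' ℂ)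
    (D : Matrix e e' ℂ) :
    krT (krA A C) D = ((A ⊗ₖ C) ⊗ₖ D).submatrix
      ((Equiv.prodAssoc _ _ _).symm.trans (Equiv.prodAssoc _ _ _).symm)
      ((Equiv.prodAssoc _ _ _).symm.trans (Equiv.prodAssoc _ _ _).symm) :=
  rfl

lemma conjTranspose_krT_krA (A : Matrix (a × b) (a' × b') ℂ) (C : Matrix c c' ℂ)
    (D : Matrix e e' ℂ) : (krT (krA A C) D)ᴴ = krT (krA Aᴴ Cᴴ) Dᴴ := by
  ext
  simp [krT, krA, star_mul']

lemma krT_krA_mul_krT_krA [Fintype a'] [Fintype b'] [Fintype c'] [Fintype e']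
    (A : Matrix (a × b) (a' × b') ℂ) (C : Matrix c c' ℂ) (D : Matrix e e' ℂ)
    (A' : Matrix (a' × b') (a'' × b'') ℂ) (C' : Matrix c' c'' ℂ) (D' : Matrix e' e'' ℂ) :
    krT (krA A C) D * krT (krA A' C') D' = krT (krA (A * A') (C * C')) (D * D') := by
  rw [krT_krA_eq_submatrix, krT_krA_eq_submatrix, krT_krA_eq_submatrix, submatrix_mul_equiv,
    ← mul_kronecker_mul, ← mul_kronecker_mul]

end KroneckerProducts

lemma mul_commMat_apply {k : Type*} {n r : ℕ} (M : Matrix k (Fin r × Fin n) ℂ) (p : k)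
    (q : Fin n × Fin r) : (M * commMat n r) p q = M p (q.2, q.1) := by
  simp [mul_apply, commMat, Fintype.sum_prod_type, ite_and]

lemma boomAmp_apply {n r : ℕ} (p : Fin n × Fin n × Fin r × Fin n) (q : Fin n × Fin r) :
    boomAmp n r p q = if p.2.2.2 = p.1 ∧ q.1 = p.2.1 ∧ p.2.2.1 = q.2 then 1 else 0 :=
  mul_commMat_apply _ p q

lemma conjTranspose_boomAmp_mul_mul_boomAmp_apply {n r : ℕ}
    (M : Matrix (Fin n × Fin n × Fin r × Fin n) (Fin n × Fin n × Fin r × Fin n) ℂ)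
    (c c' : Fin n) (m m' : Fin r) :
    ((boomAmp n r)ᴴ * M * boomAmp n r) (c, m) (c', m') =
      ∑ i, ∑ i', M (i, c, m, i) (i', c', m', i') := by
  simp only [mul_apply, conjTranspose_apply, boomAmp_apply, Fintype.sum_prod_type, ite_and,
    apply_ite star, star_one, star_zero, ite_mul, mul_ite, one_mul, zero_mul, mul_one, mul_zero,
    Finset.sum_ite_eq, Finset.sum_ite_eq', Finset.sum_ite_irrel, Finset.sum_const_zero,
    Finset.mem_univ, if_true]
  exact Finset.sum_comm

lemma sum_psi_apply_mul {n : ℕ} (U : Matrix (Fin n × Fin n) (Fin n × Fin n) ℂ) (D : Mat n)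
    (c c' : Fin n) : ∑ i, ∑ i', psi n U (i, c) (i', c') * D i i' = (U *ᵥ vec D) (c', c) := by
  rw [mulVec, dotProduct, Fintype.sum_prod_type, Finset.sum_comm]
  rfl

lemma sum_pick_apply_mul_defect {n : ℕ} {ι : Type*} [Fintype ι] [DecidableEq ι] {X : ι → Mat n}
    (hX : StrictRowContraction X) (c c' : Fin n) :
    ∑ i, ∑ i', pick X (i, c) (i', c') * (1 - ∑ j, X j * (X j)ᴴ) i i' = (1 : Mat n) c c' := by
  set S := 1 - ∑ j, conjM (X j) ⊗ₖ X j
  have hS : S *ᵥ vec 1 = vec (1 - ∑ j, X j * (X j)ᴴ) := by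
    simpa using one_sub_sum_conjM_kronecker_mulVec_vec X 1
  rw [pick, sum_psi_apply_mul, ← hS, mulVec_mulVec,
    nonsing_inv_mul S ((isUnit_iff_isUnit_det S).mp (isUnit_one_sub_sum_conjM_kronecker hX)),
    one_mulVec]
  rfl

/-- For a strict row contraction `X`, with `Δ_X = I_n − Σᵢ Xᵢ Xᵢ*` and
`𝒱_X = (P_X^{1/2} ⊗ I_n ⊗ Δ_X^{1/2})·B̆_n`, the matrix `𝒱_X` is an isometry:
`𝒱_X*·𝒱_X = I_{n²}`.  (`hP.sqrt`, `hΔ.sqrt` are the positive semidefinite square roots.) -/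
theorem miniDilation_isometry {n d : ℕ} (X : Fin d → Mat n)
    (hX : StrictRowContraction X)
    (hP : (pick X).PosSemidef)
    (hΔ : ((1 : Mat n) - ∑ i, X i * (X i)ᴴ).PosSemidef) :
    (krT (krA hP.sqrt (1 : Mat n)) hΔ.sqrt * boomAmp n n)ᴴ *
        (krT (krA hP.sqrt (1 : Mat n)) hΔ.sqrt * boomAmp n n) =
      (1 : Matrix (Fin n × Fin n) (Fin n × Fin n) ℂ) := by
  set K := krT (krA hP.sqrt (1 : Mat n)) hΔ.sqrt
  have hK : Kᴴ * K = krT (krA (pick X) 1) (1 - ∑ i, X i * (X i)ᴴ) := by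
    rw [conjTranspose_krT_krA, hP.isHermitian_sqrt.eq, hΔ.isHermitian_sqrt.eq, conjTranspose_one,
      krT_krA_mul_krT_krA, hP.sqrt_mul_self, hΔ.sqrt_mul_self, Matrix.mul_one]
  calc (K * boomAmp n n)ᴴ * (K * boomAmp n n) = (boomAmp n n)ᴴ * (Kᴴ * K) * boomAmp n n := by
        simp only [conjTranspose_mul, Matrix.mul_assoc]
    _ = 1 := by
        ext ⟨c, m⟩ ⟨c', m'⟩
        rw [hK, conjTranspose_boomAmp_mul_mul_boomAmp_apply, ← one_kronecker_one,
          kroneckerMap_apply]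
        simp only [krT, krA, of_apply, mul_right_comm _ ((1 : Mat n) m m'), ← Finset.sum_mul,
          sum_pick_apply_mul_defect hX]
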